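/- arXiv:2209.12017 — 2 statements merged into one kernel-verified Lean document; each statement's English description precedes it below -/
import Mathlib

section
/- Let P ⪰ 0 and R ⪰ 0 be symmetric n×n matrices. Then (I + PR)^{-1}P is symmetric and positive semidefinite. Hence if Q ⪰ 0, the Riccati update P' = Q + Aᵀ(I + PR)^{-1}PA is symmetric positive semidefinite, so the backward recursion P_t = Q_t + A_tᵀ(I + P_{t+1}R_t)^{-1}P_{t+1}A_t preserves symmetry and positive semidefiniteness. -/
/-!
Factor `P = Bᴴ B`. The push-through identity `(1 + XY)⁻¹ X = X (1 + YX)⁻¹` gives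
`(1 + P R)⁻¹ P = Bᴴ (1 + B R Bᴴ)⁻¹ B`, a congruence of the inverse of a positive semidefinite
matrix, hence positive semidefinite. The Riccati update adds `Q` to a further congruence of it.
-/

open Matrix
open scoped MatrixOrder ComplexOrder

namespace Matrix

variable {m n : Type*} [Fintype m] [Fintype n] [DecidableEq m] [DecidableEq n]

/-- Holds without invertibility: by the Weinstein–Aronszajn identity `1 + A * B` and `1 + B * A`
are invertible together, and otherwise both sides are zero. -/
theorem inv_one_add_mul_mul_eq_mul_inv_one_add_mul {α : Type*} [CommRing α]
    (A : Matrix m n α) (B : Matrix n m α) :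
    (1 + A * B)⁻¹ * A = A * (1 + B * A)⁻¹ := by
  by_cases hAB : IsUnit (1 + A * B).det
  · have hBA : IsUnit (1 + B * A).det := det_one_add_mul_comm A B ▸ hAB
    have hcomm : (1 + A * B) * A = A * (1 + B * A) := by
      simp only [Matrix.add_mul, Matrix.mul_add, Matrix.one_mul, Matrix.mul_one, Matrix.mul_assoc]
    calc (1 + A * B)⁻¹ * A
        = (1 + A * B)⁻¹ * ((1 + A * B) * A) * (1 + B * A)⁻¹ := by
          rw [hcomm, Matrix.mul_assoc, Matrix.mul_assoc, mul_nonsing_inv _ hBA, Matrix.mul_one]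
      _ = A * (1 + B * A)⁻¹ := by rw [nonsing_inv_mul_cancel_left _ _ hAB]
  · have hBA : ¬IsUnit (1 + B * A).det := det_one_add_mul_comm A B ▸ hAB
    rw [nonsing_inv_apply_not_isUnit _ hAB, nonsing_inv_apply_not_isUnit _ hBA,
      Matrix.zero_mul, Matrix.mul_zero]

theorem PosSemidef.inv_one_add_mul_mul {𝕜 : Type*} [RCLike 𝕜] {P R : Matrix n n 𝕜}
    (hP : P.PosSemidef) (hR : R.PosSemidef) : ((1 + P * R)⁻¹ * P).PosSemidef := by
  obtain ⟨B, rfl⟩ := CStarAlgebra.nonneg_iff_eq_star_mul_self.mp hP.nonneg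
  rw [star_eq_conjTranspose, ← Matrix.mul_assoc, Matrix.mul_assoc Bᴴ B R,
    inv_one_add_mul_mul_eq_mul_inv_one_add_mul]
  exact (PosSemidef.one.add (hR.mul_mul_conjTranspose_same B)).inv.conjTranspose_mul_mul_same B

end Matrix

theorem riccati_update_preserves_psd
    (n : ℕ) (P R Q A : Matrix (Fin n) (Fin n) ℝ)
    (hP : P.PosSemidef) (hR : R.PosSemidef) (hQ : Q.PosSemidef) :
    ((1 + P * R)⁻¹ * P).PosSemidef ∧
    (Q + Aᵀ * (1 + P * R)⁻¹ * P * A).PosSemidef := by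
  have hgain := hP.inv_one_add_mul_mul hR
  refine ⟨hgain, hQ.add ?_⟩
  simpa only [conjTranspose_eq_transpose_of_trivial, Matrix.mul_assoc]
    using hgain.conjTranspose_mul_mul_same A
end

section
/- Let f : ℝ^r → ℝ be convex and differentiable, let η(k) > 0 satisfy ∑_k η(k) = ∞ and ∑_k η(k)² < ∞, and suppose the gradients along the iterates are uniformly bounded: ‖∇f(θ(k))‖ ≤ C for all k. If f attains its minimum at some θ*, then the gradient descent iterates θ(k+1) = θ(k) − η(k)∇f(θ(k)) satisfy liminf_{k→∞} f(θ(k)) = f(θ*). -/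
/-!
With `aₖ = ‖θₖ - θ*‖²`, expanding the square and using the first-order convexity inequality
`f θₖ - f θ* ≤ ⟪∇f θₖ, θₖ - θ*⟫` gives `aₖ₊₁ ≤ aₖ - 2ηₖ (f θₖ - f θ*) + C² ηₖ²`.
Telescoping and `∑ ηₖ² < ∞` make `∑ ηₖ (f θₖ - f θ*)` finite; since `∑ ηₖ = ∞`, the gap
`f θₖ - f θ*` cannot stay above any `ε > 0`, so its liminf is `0`.
-/

open Filter Finset InnerProductSpace

theorem ConvexOn.add_fderiv_sub_le {E : Type*} [NormedAddCommGroup E] [NormedSpace ℝ E]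
    {s : Set E} {f : E → ℝ} {f' : E →L[ℝ] ℝ} {x y : E} (hf : ConvexOn ℝ s f)
    (hx : x ∈ s) (hy : y ∈ s) (hf' : HasFDerivAt f f' x) :
    f x + f' (y - x) ≤ f y := by
  let L : ℝ →ᵃ[ℝ] E := AffineMap.lineMap x y
  have hderiv : HasDerivAt (f ∘ L) (f' (y - x)) 0 :=
    (by simpa [L] using hf' : HasFDerivAt f f' (L 0)).comp_hasDerivAt 0
      AffineMap.hasDerivAt_lineMap
  have hslope := (hf.comp_affineMap L).le_slope_of_hasDerivAt (by simpa [L] using hx)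
    (by simpa [L] using hy) zero_lt_one hderiv
  simp only [slope_def_field, L, AffineMap.lineMap_apply_zero, AffineMap.lineMap_apply_one,
    Function.comp_apply, sub_zero, div_one] at hslope
  linarith

section InnerProductSpace

variable {F : Type*} [NormedAddCommGroup F] [InnerProductSpace ℝ F] [CompleteSpace F]
  {f : F → ℝ} {x : F}

theorem ConvexOn.add_inner_gradient_sub_le {s : Set F} {g y : F} (hf : ConvexOn ℝ s f)
    (hx : x ∈ s) (hy : y ∈ s) (hg : HasGradientAt f g x) :
    f x + ⟪g, y - x⟫_ℝ ≤ f y := by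
  simpa using hf.add_fderiv_sub_le hx hy hg.hasFDerivAt

theorem ConvexOn.norm_sub_smul_gradient_sub_sq_le (hf : ConvexOn ℝ Set.univ f)
    (hd : DifferentiableAt ℝ f x) {η : ℝ} (hη : 0 ≤ η) (z : F) :
    ‖x - η • gradient f x - z‖ ^ 2
      ≤ ‖x - z‖ ^ 2 - 2 * η * (f x - f z) + η ^ 2 * ‖gradient f x‖ ^ 2 := by
  have hgap : f x - f z ≤ ⟪gradient f x, x - z⟫_ℝ := by
    have := hf.add_inner_gradient_sub_le (Set.mem_univ x) (Set.mem_univ z) hd.hasGradientAt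
    rw [← neg_sub x z, inner_neg_right] at this
    linarith
  rw [sub_right_comm, norm_sub_sq_real, inner_smul_right, real_inner_comm, norm_smul,
    Real.norm_of_nonneg hη, mul_pow]
  nlinarith [mul_le_mul_of_nonneg_left hgap hη]

end InnerProductSpace

theorem summable_of_succ_le_sub_add {a c e : ℕ → ℝ} (ha : ∀ k, 0 ≤ a k) (hc : ∀ k, 0 ≤ c k)
    (he : Summable e) (he₀ : ∀ k, 0 ≤ e k) (hrec : ∀ k, a (k + 1) ≤ a k - c k + e k) :
    Summable c := by
  refine summable_of_sum_range_le hc (c := a 0 + ∑' k, e k) fun n => ?_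
  calc ∑ k ∈ range n, c k ≤ ∑ k ∈ range n, (a k - a (k + 1) + e k) :=
        sum_le_sum fun k _ => by linarith [hrec k]
    _ = a 0 - a n + ∑ k ∈ range n, e k := by rw [sum_add_distrib, sum_range_sub']
    _ ≤ a 0 + ∑' k, e k := by linarith [ha n, he.sum_le_tsum (range n) fun k _ => he₀ k]

theorem frequently_lt_of_summable_mul {η b : ℕ → ℝ} (hη : ∀ k, 0 ≤ η k)
    (hηsum : ¬ Summable η) (hηb : Summable fun k => η k * b k) {ε : ℝ} (hε : 0 < ε) :
    ∃ᶠ k in atTop, b k < ε := by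
  contrapose! hηsum
  refine Summable.of_norm_bounded_eventually_nat (hηb.div_const ε) ?_
  filter_upwards [hηsum] with k hk
  rw [Real.norm_of_nonneg (hη k), le_div_iff₀ hε]
  exact mul_le_mul_of_nonneg_left hk (hη k)

theorem Filter.liminf_eq_of_eventually_le_of_frequently_lt {α : Type*} {l : Filter α}
    {u : α → ℝ} {m : ℝ} (hle : ∀ᶠ x in l, m ≤ u x) (hfreq : ∀ ε > 0, ∃ᶠ x in l, u x < m + ε) :
    liminf u l = m := by
  have hbdd : IsBoundedUnder (· ≥ ·) l u := ⟨m, hle⟩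
  refine le_antisymm (le_of_forall_pos_le_add fun ε hε => ?_) (le_liminf_of_le ?_ hle)
  · exact liminf_le_of_frequently_le ((hfreq ε hε).mono fun _ h => h.le) hbdd
  · exact IsCoboundedUnder.of_frequently_le ((hfreq 1 one_pos).mono fun _ h => h.le)

theorem gradient_descent_diminishing_liminf
    (r : ℕ) (f : EuclideanSpace ℝ (Fin r) → ℝ)
    (hconv : ConvexOn ℝ Set.univ f) (hdiff : Differentiable ℝ f)
    (η : ℕ → ℝ) (hηpos : ∀ k, 0 < η k)
    (hηsum : ¬ Summable η) (hηsq : Summable (fun k => η k ^ 2))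
    (θ : ℕ → EuclideanSpace ℝ (Fin r)) (C : ℝ)
    (hbound : ∀ k, ‖gradient f (θ k)‖ ≤ C)
    (θstar : EuclideanSpace ℝ (Fin r)) (hmin : ∀ y, f θstar ≤ f y)
    (hupdate : ∀ k, θ (k + 1) = θ k - η k • gradient f (θ k)) :
    Filter.liminf (fun k => f (θ k)) Filter.atTop = f θstar := by
  have hC : 0 ≤ C := (norm_nonneg _).trans (hbound 0)
  have hrec : ∀ k, ‖θ (k + 1) - θstar‖ ^ 2 ≤ ‖θ k - θstar‖ ^ 2
      - 2 * η k * (f (θ k) - f θstar) + C ^ 2 * η k ^ 2 := fun k => by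
    have hgrad : ‖gradient f (θ k)‖ ^ 2 ≤ C ^ 2 := pow_le_pow_left₀ (norm_nonneg _) (hbound k) 2
    rw [hupdate]
    nlinarith [hconv.norm_sub_smul_gradient_sub_sq_le (hdiff (θ k)) (hηpos k).le θstar,
      mul_le_mul_of_nonneg_left hgrad (sq_nonneg (η k))]
  have hsummable : Summable fun k => η k * (f (θ k) - f θstar) := by
    refine (summable_mul_left_iff two_ne_zero).1 (summable_of_succ_le_sub_add
      (fun k => sq_nonneg ‖θ k - θstar‖) (fun k => ?_) (hηsq.mul_left (C ^ 2))
      (fun k => by positivity) fun k => by linarith [hrec k])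
    exact mul_nonneg zero_le_two (mul_nonneg (hηpos k).le (sub_nonneg.2 (hmin _)))
  refine liminf_eq_of_eventually_le_of_frequently_lt (Eventually.of_forall fun k => hmin _)
    fun ε hε => ?_
  exact (frequently_lt_of_summable_mul (fun k => (hηpos k).le) hηsum hsummable hε).mono
    fun k hk => by linarith
end
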